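/- ∫₀¹ x·log(x)/(x²-x+1) dx = 5π²/36 - (1/6)ψ'(1/3). -/

import Mathlib

/-!
Since `x / (x² - x + 1) = (x + x²) / (1 + x³) = ∑ (-1)ⁿ (x^(3n+1) + x^(3n+2))` on `(0, 1)` and
`∫₀¹ xᵐ log x = -1/(m+1)²`, termwise integration turns the integral into the alternating series
`-∑ (-1)ⁿ (1/(3n+2)² + 1/(3n+3)²)`, i.e. into sums of `1/n²` over residue classes mod 6.
Splitting and rescaling residue classes expresses all of these through `ζ(2) = π²/6` and
`∑ 1/(6k+2)² = ψ'(1/3)/36`.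
-/

/-- The trigamma function `ψ'(x) = ∑_{k=0}^∞ 1/(x+k)²`. -/
noncomputable def trigamma (x : ℝ) : ℝ := ∑' k : ℕ, 1 / (x + k) ^ 2

open Real MeasureTheory Set

noncomputable def invSqSumAP (a d : ℕ) : ℝ := ∑' k : ℕ, 1 / ((a + d * k : ℕ) : ℝ) ^ 2

namespace invSqSumAP

lemma summable (a : ℕ) {d : ℕ} (hd : 0 < d) :
    Summable fun k : ℕ => 1 / ((a + d * k : ℕ) : ℝ) ^ 2 :=
  (Real.summable_one_div_nat_pow.mpr one_lt_two).comp_injective fun _ _ h =>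
    Nat.eq_of_mul_eq_mul_left hd (Nat.add_left_cancel h)

lemma mul_mul (c a d : ℕ) : invSqSumAP (c * a) (c * d) = invSqSumAP a d / (c : ℝ) ^ 2 := by
  simp only [invSqSumAP, ← tsum_div_const]
  refine tsum_congr fun k => ?_
  rw [show c * a + c * d * k = c * (a + d * k) by ring, Nat.cast_mul, mul_pow]
  field_simp

lemma eq_sum_range (a : ℕ) {d : ℕ} (hd : 0 < d) {m : ℕ} (hm : 0 < m) :
    invSqSumAP a d = ∑ j ∈ Finset.range m, invSqSumAP (a + d * j) (d * m) := by
  obtain ⟨n, rfl⟩ := Nat.exists_eq_add_of_lt hm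
  rw [zero_add, invSqSumAP, Nat.sumByResidueClasses (summable a hd) (n + 1),
    ← Fin.sum_univ_eq_sum_range]
  refine Finset.sum_congr rfl fun j _ => tsum_congr fun k => ?_
  congr 3
  simp only [ZMod.val]
  ring

lemma one_one : invSqSumAP 1 1 = π ^ 2 / 6 := by
  simpa [invSqSumAP, add_comm] using ((hasSum_nat_add_iff' 1).mpr hasSum_zeta_two).tsum_eq

lemma three_six : invSqSumAP 3 6 = π ^ 2 / 72 := by
  have h₁ := eq_sum_range 1 one_pos (by norm_num : 0 < 2)
  have h₂ := mul_mul 2 1 1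
  have h₃ := mul_mul 3 1 2
  norm_num [Finset.sum_range_succ] at h₁ h₂ h₃
  linarith [one_one]

lemma six_six : invSqSumAP 6 6 = π ^ 2 / 216 := by
  have h := mul_mul 6 1 1
  norm_num at h
  linarith [one_one]

lemma five_six : invSqSumAP 5 6 = 4 * π ^ 2 / 27 - 5 * invSqSumAP 2 6 := by
  have h₁ := eq_sum_range 2 (by norm_num : 0 < 2) (by norm_num : 0 < 3)
  have h₂ := eq_sum_range 2 (by norm_num : 0 < 3) (by norm_num : 0 < 2)
  have h₃ := mul_mul 2 1 1
  have h₄ := mul_mul 2 2 3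
  norm_num [Finset.sum_range_succ] at h₁ h₂ h₃ h₄
  linarith [one_one, six_six]

end invSqSumAP

lemma trigamma_one_third : trigamma (1 / 3) = 36 * invSqSumAP 2 6 := by
  rw [trigamma, invSqSumAP, ← tsum_mul_left]
  refine tsum_congr fun k => ?_
  push_cast
  field_simp
  ring

lemma continuous_pow_succ_mul_log (m : ℕ) : Continuous fun x : ℝ => x ^ (m + 1) * log x := by
  simp_rw [pow_succ, mul_assoc]
  exact (continuous_pow m).mul continuous_mul_log

lemma integral_pow_mul_log (m : ℕ) :
    ∫ x in (0 : ℝ)..1, x ^ m * log x = -(1 / ((m : ℝ) + 1) ^ 2) := by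
  have hF : ∀ x ∈ Ioo (0 : ℝ) 1, HasDerivAt
      (fun x => x ^ (m + 1) * log x / (m + 1) - x ^ (m + 1) / (m + 1) ^ 2) (x ^ m * log x) x := by
    intro x hx
    have hpow := hasDerivAt_pow (m + 1) x
    refine (((hpow.mul (hasDerivAt_log hx.1.ne')).div_const ((m : ℝ) + 1)).sub
      (hpow.div_const (((m : ℝ) + 1) ^ 2))).congr_deriv ?_
    simp only [add_tsub_cancel_right, Nat.cast_add, Nat.cast_one]
    field_simp [hx.1.ne']
    ring
  rw [intervalIntegral.integral_eq_sub_of_hasDerivAt_of_le zero_le_one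
    (((continuous_pow_succ_mul_log m).div_const _).sub
      ((continuous_pow _).div_const _)).continuousOn hF
    (intervalIntegral.intervalIntegrable_log'.continuousOn_mul (continuous_pow m).continuousOn)]
  simp

lemma hasSum_div_sq_sub_self_add_one {x : ℝ} (hx : |x| < 1) :
    HasSum (fun n : ℕ => (-1) ^ n * (x ^ (3 * n + 1) + x ^ (3 * n + 2))) (x / (x ^ 2 - x + 1)) := by
  have hx3 : |-x ^ 3| < 1 := by
    rw [abs_neg, abs_pow]; exact pow_lt_one₀ (abs_nonneg x) hx three_ne_zero
  have h1x : 1 + x ≠ 0 := by linarith [neg_abs_le x]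
  have hq : x ^ 2 - x + 1 ≠ 0 := by nlinarith [sq_nonneg (2 * x - 1)]
  have h := (hasSum_geometric_of_abs_lt_one hx3).mul_left (x + x ^ 2)
  rw [sub_neg_eq_add, show 1 + x ^ 3 = (1 + x) * (x ^ 2 - x + 1) by ring,
    show (x + x ^ 2) * ((1 + x) * (x ^ 2 - x + 1))⁻¹ = x / (x ^ 2 - x + 1) by field_simp] at h
  refine h.congr_fun fun n => ?_
  rw [neg_pow (x ^ 3), ← pow_mul]
  ring

lemma integral_pow_add_pow_mul_log (n : ℕ) :
    ∫ x in Ioo (0 : ℝ) 1, (x ^ (3 * n + 1) + x ^ (3 * n + 2)) * log x =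
      -(1 / ((2 + 3 * n : ℕ) : ℝ) ^ 2 + 1 / ((3 + 3 * n : ℕ) : ℝ) ^ 2) := by
  simp_rw [add_mul]
  rw [← integral_Ioc_eq_integral_Ioo, ← intervalIntegral.integral_of_le zero_le_one,
    intervalIntegral.integral_add
      ((continuous_pow_succ_mul_log _).intervalIntegrable _ _)
      ((continuous_pow_succ_mul_log (3 * n + 1)).intervalIntegrable _ _),
    integral_pow_mul_log, integral_pow_mul_log]
  push_cast
  ring

lemma hasSum_integral_mul_log_div_sq_sub_self_add_one :
    HasSum
      (fun n : ℕ => -((-1) ^ n * (1 / ((2 + 3 * n : ℕ) : ℝ) ^ 2 + 1 / ((3 + 3 * n : ℕ) : ℝ) ^ 2)))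
      (∫ x in (0 : ℝ)..1, x * log x / (x ^ 2 - x + 1)) := by
  set u : ℕ → ℝ → ℝ := fun n x => (x ^ (3 * n + 1) + x ^ (3 * n + 2)) * log x
  have hu_cont (n : ℕ) : Continuous (u n) := by
    simp only [u, add_mul]
    exact (continuous_pow_succ_mul_log _).add (continuous_pow_succ_mul_log (3 * n + 1))
  have hu_nonpos (n : ℕ) : ∀ x ∈ Ioo (0 : ℝ) 1, u n x ≤ 0 := fun x hx =>
    mul_nonpos_of_nonneg_of_nonpos
      (add_nonneg (pow_nonneg hx.1.le _) (pow_nonneg hx.1.le _)) (log_nonpos hx.1.le hx.2.le)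
  have hint (n : ℕ) : Integrable (fun x => (-1) ^ n * u n x) (volume.restrict (Ioo 0 1)) :=
    ((hu_cont n).integrableOn_Icc.mono_set Ioo_subset_Icc_self).const_mul _
  have hnorm (n : ℕ) : ∫ x in Ioo (0 : ℝ) 1, ‖(-1) ^ n * u n x‖ =
      1 / ((2 + 3 * n : ℕ) : ℝ) ^ 2 + 1 / ((3 + 3 * n : ℕ) : ℝ) ^ 2 := by
    rw [← neg_neg (_ + _), ← integral_pow_add_pow_mul_log, ← integral_neg]
    refine setIntegral_congr_fun measurableSet_Ioo fun x hx => ?_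
    rw [norm_mul, norm_pow, norm_neg, norm_one, one_pow, one_mul,
      Real.norm_of_nonpos (hu_nonpos n x hx)]
  have hsum := hasSum_integral_of_summable_integral_norm hint (by
    simpa only [hnorm] using
      (invSqSumAP.summable 2 three_pos).add (invSqSumAP.summable 3 three_pos))
  have hpointwise : ∀ x ∈ Ioo (0 : ℝ) 1, x * log x / (x ^ 2 - x + 1) = ∑' n, (-1) ^ n * u n x := by
    intro x hx
    have hx1 : |x| < 1 := by rw [abs_of_pos hx.1]; exact hx.2
    simp only [u, ← mul_assoc, ((hasSum_div_sq_sub_self_add_one hx1).mul_right (log x)).tsum_eq]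
    ring
  rw [intervalIntegral.integral_of_le zero_le_one, integral_Ioc_eq_integral_Ioo,
    setIntegral_congr_fun measurableSet_Ioo hpointwise]
  refine hsum.congr_fun fun n => ?_
  rw [integral_const_mul, integral_pow_add_pow_mul_log, mul_neg]

lemma hasSum_neg_one_pow_mul_invSq_add :
    HasSum (fun n : ℕ => (-1) ^ n * (1 / ((2 + 3 * n : ℕ) : ℝ) ^ 2 + 1 / ((3 + 3 * n : ℕ) : ℝ) ^ 2))
      (invSqSumAP 2 6 + invSqSumAP 3 6 + -(invSqSumAP 5 6 + invSqSumAP 6 6)) := by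
  have hAP (a : ℕ) := (invSqSumAP.summable a (by norm_num : 0 < 6)).hasSum
  refine HasSum.even_add_odd (((hAP 2).add (hAP 3)).congr_fun fun k => ?_)
    (((hAP 5).add (hAP 6)).neg.congr_fun fun k => ?_)
  · rw [pow_mul]
    ring_nf
  · rw [pow_succ, pow_mul]
    ring_nf

theorem stmt7 :
    ∫ x in (0:ℝ)..1, x * Real.log x / (x ^ 2 - x + 1) =
      5 * Real.pi ^ 2 / 36 - (1 / 6) * trigamma (1/3) := by
  rw [hasSum_integral_mul_log_div_sq_sub_self_add_one.unique
      hasSum_neg_one_pow_mul_invSq_add.neg,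
    trigamma_one_third, invSqSumAP.three_six, invSqSumAP.five_six, invSqSumAP.six_six]
  ring
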